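/- Let D ⊂ ℝ^d be a bounded Lipschitz domain, η ∈ ℕ, 1 ≤ p, p_1, …, p_r ≤ ∞ with q := (p^{-1} + p_1^{-1} + ⋯ + p_r^{-1})^{-1} ≥ 1, and let X_1, …, X_r, Y be Banach spaces. For M ∈ W^{η,p}(D; B(X_1, …, X_r; Y)) and v_j ∈ W^{η,p_j}(D; X_j) for j = 1, …, r, the pointwise application M v_1 ⋯ v_r lies in W^{η,q}(D; Y) and ‖M v_1 ⋯ v_r‖_{η,q,D;Y} ≤ ‖M‖_{η,p,D;B(X_1,…,X_r;Y)} · ∏_{j=1}^r ‖v_j‖_{η,p_j,D;X_j}. -/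

import Mathlib

open MeasureTheory Finset
open scoped ENNReal RealInnerProductSpace

noncomputable section

/-- `ℝ^n` with the Euclidean structure. -/
abbrev Euc (n : ℕ) : Type := EuclideanSpace ℝ (Fin n)

/-- Partial derivative in the `i`-th coordinate direction. -/
noncomputable def pder {n : ℕ} {X : Type*} [NormedAddCommGroup X] [NormedSpace ℝ X]
    (i : Fin n) (f : Euc n → X) : Euc n → X :=
  fun x => fderiv ℝ f x (EuclideanSpace.single i 1)

/-- Iterated partial derivative `∂^α` for a multi-index `α`. -/
noncomputable def mder {n : ℕ} {X : Type*} [NormedAddCommGroup X] [NormedSpace ℝ X]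
    (α : Fin n → ℕ) (f : Euc n → X) : Euc n → X :=
  ((List.ofFn fun i : Fin n => (pder i)^[α i]).foldr (· ∘ ·) id) f

/-- The finset of multi-indices `α ∈ ℕ^n` with `|α| ≤ η`. -/
def mIdx (n η : ℕ) : Finset (Fin n → ℕ) :=
  (Fintype.piFinset fun _ : Fin n => Finset.range (η + 1)).filter fun α => (∑ i, α i) ≤ η

/-- Multi-index factorial `α!`. -/
def mfact {n : ℕ} (α : Fin n → ℕ) : ℕ := ∏ i, Nat.factorial (α i)

/-- Order `|α|` of a multi-index. -/
def mdeg {n : ℕ} (α : Fin n → ℕ) : ℕ := ∑ i, α i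

/-- The Sobolev–Bochner norm `‖f‖_{η,p,D;X} = ∑_{|α|≤η} (1/α!) ‖∂^α f‖_{L^p(μ;X)}`. -/
noncomputable def sobNorm {n : ℕ} {X : Type*} [NormedAddCommGroup X] [NormedSpace ℝ X]
    (η : ℕ) (p : ℝ≥0∞) (μ : Measure (Euc n)) (f : Euc n → X) : ℝ :=
  ∑ α ∈ mIdx n η, ((mfact α : ℝ))⁻¹ * (eLpNorm (mder α f) p μ).toReal

/-- Membership in the Sobolev–Bochner space `W^{η,p}(D;X)`. -/
def MemW {n : ℕ} {X : Type*} [NormedAddCommGroup X] [NormedSpace ℝ X]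
    (η : ℕ) (p : ℝ≥0∞) (μ : Measure (Euc n)) (f : Euc n → X) : Prop :=
  ∀ α ∈ mIdx n η, MemLp (mder α f) p μ

/-- Parametric derivative `∂_y^α u` of a parametrised field. -/
noncomputable def pyder {m n : ℕ} {X : Type*} [NormedAddCommGroup X] [NormedSpace ℝ X]
    (α : Fin m → ℕ) (u : Euc m → Euc n → X) : Euc m → Euc n → X :=
  fun y x => mder α (fun y' => u y' x) y

/-- The norm `⦀u⦀_{η,p,D;X} := ess sup_{y} ‖u[y]‖_{η,p,D;X}`. -/
noncomputable def tnorm {m n : ℕ} {X : Type*} [NormedAddCommGroup X] [NormedSpace ℝ X]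
    (η : ℕ) (p : ℝ≥0∞) (μ : Measure (Euc n)) (P : Measure (Euc m))
    (u : Euc m → Euc n → X) : ℝ :=
  (essSup (fun y => ENNReal.ofReal (sobNorm η p μ (u y))) P).toReal

/-- Membership in `L^∞_{ℙ_y}(□; W^{η,p}(D;X))`. -/
def MemLW {m n : ℕ} {X : Type*} [NormedAddCommGroup X] [NormedSpace ℝ X]
    (η : ℕ) (p : ℝ≥0∞) (μ : Measure (Euc n)) (P : Measure (Euc m))
    (u : Euc m → Euc n → X) : Prop :=
  (∀ᵐ y ∂P, MemW η p μ (u y)) ∧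
    essSup (fun y => ENNReal.ofReal (sobNorm η p μ (u y))) P < ⊤

/-- The parameter box `□ = [-1,1]^m`. -/
def box (m : ℕ) : Set (Euc m) := {y | ∀ i, y i ∈ Set.Icc (-1 : ℝ) 1}

/-- The finset of multi-indices `β ≤ ν` (componentwise). -/
def mIic {m : ℕ} (ν : Fin m → ℕ) : Finset (Fin m → ℕ) :=
  Fintype.piFinset fun i => Finset.range (ν i + 1)

/-- Multi-index binomial coefficient. -/
def mchoose {m : ℕ} (α β : Fin m → ℕ) : ℕ := ∏ i, Nat.choose (α i) (β i)

/-!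
Write `D^α f = ∂^α f / α!` for the Taylor coefficients of `f`, so that
`‖f‖_{η,p} = ∑_{|α| ≤ η} ‖D^α f‖_p`. In these terms the Leibniz rule has no multinomial
coefficients: `D^α (M v₁ ⋯ vᵣ) = ∑_{B₀ + ⋯ + Bᵣ = α} (D^{B₀} M) (D^{B₁} v₁, …, D^{Bᵣ} vᵣ)`, proved
by adding one partial derivative at a time. By Hölder's inequality each term has `L^q` norm at
most `‖D^{B₀} M‖_p ∏ ‖D^{Bⱼ} vⱼ‖_{pⱼ}`, and since `q ≥ 1` the triangle inequality applies.
Summing over `|α| ≤ η`, every tuple `(B₀, …, Bᵣ)` with all `|Bₖ| ≤ η` occurs at most once, so the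
total is at most the expanded product `∏ₖ ∑_{|γ| ≤ η} ‖D^γ fₖ‖`. The estimate is proved in
`ℝ≥0∞`, where it needs no integrability, and membership of `M v₁ ⋯ vᵣ` in `W^{η,q}` is read off
from it.
-/

theorem comp_foldr_ofFn_iterate {E : Type*} :
    ∀ {d : ℕ} (ops : Fin d → E → E) (c : Fin d → ℕ) {i : Fin d}, (∀ j < i, c j = 0) →
      ops i ∘ (List.ofFn fun j => (ops j)^[c j]).foldr (· ∘ ·) id
        = (List.ofFn fun j => (ops j)^[(c + Pi.single i 1 : Fin d → ℕ) j]).foldr (· ∘ ·) id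
  | 0, _, _, i, _ => i.elim0
  | d + 1, ops, c, i, hc => by
    simp only [List.ofFn_succ, List.foldr_cons]
    induction i using Fin.cases with
    | zero =>
      simp only [Pi.add_apply, Pi.single_eq_same, Function.iterate_succ']
      rw [← Function.comp_assoc]
      simp [Fin.succ_ne_zero]
    | succ i =>
      simp only [Pi.add_apply, hc 0 (Fin.succ_pos i), Pi.single_eq_of_ne (Fin.succ_ne_zero i).symm,
        Function.iterate_zero, Function.id_comp, add_zero]
      rw [comp_foldr_ofFn_iterate (fun j => ops j.succ) (fun j => c j.succ)
        fun j hj => hc j.succ (Fin.succ_lt_succ_iff.2 hj)]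
      simp only [Pi.add_apply, Pi.single_apply, Fin.succ_inj]

section MultiIndex

variable {d : ℕ}

lemma mem_mIdx_iff {η : ℕ} {α : Fin d → ℕ} : α ∈ mIdx d η ↔ mdeg α ≤ η := by
  refine ⟨fun h => (Finset.mem_filter.1 h).2, fun h => Finset.mem_filter.2 ⟨?_, h⟩⟩
  refine Fintype.mem_piFinset.2 fun i => Finset.mem_range_succ_iff.2 ?_
  exact (Finset.single_le_sum (fun j _ => Nat.zero_le (α j)) (Finset.mem_univ i)).trans h

lemma mdeg_add_single (β : Fin d → ℕ) (i : Fin d) : mdeg (β + Pi.single i 1) = mdeg β + 1 := by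
  simp [mdeg, Finset.sum_add_distrib]

lemma mfact_ne_zero (α : Fin d → ℕ) : mfact α ≠ 0 :=
  Finset.prod_ne_zero_iff.2 fun i _ => (α i).factorial_ne_zero

lemma mfact_add_single (β : Fin d → ℕ) (i : Fin d) :
    mfact (β + Pi.single i 1) = mfact β * (β i + 1) := by
  simp only [mfact, Pi.add_apply]
  rw [← Finset.mul_prod_erase _ _ (Finset.mem_univ i),
    ← Finset.mul_prod_erase _ (fun j => (β j).factorial) (Finset.mem_univ i),
    Finset.prod_congr rfl fun j hj => by rw [Pi.single_eq_of_ne (Finset.ne_of_mem_erase hj),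
      add_zero], Pi.single_eq_same, Nat.factorial_succ]
  ring

-- Raising only indices at or below the lowest nonzero entry matches the order in which `mder`
-- composes partial derivatives (see `pder_mder`).
theorem multiIndex_induction {P : (Fin d → ℕ) → Prop} (zero : P 0)
    (add_single : ∀ β i, (∀ j < i, β j = 0) → P β → P (β + Pi.single i 1)) (α : Fin d → ℕ) :
    P α := by
  induction h : mdeg α generalizing α with
  | zero =>
    obtain rfl : α = 0 := funext fun j => Finset.sum_eq_zero_iff.1 h j (Finset.mem_univ j)
    exact zero
  | succ n ih =>
    have hsupp : (Finset.univ.filter fun j => α j ≠ 0).Nonempty := by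
      by_contra hempty
      simp only [Finset.not_nonempty_iff_eq_empty, Finset.filter_eq_empty_iff, Finset.mem_univ,
        ne_eq, not_not, true_implies] at hempty
      simp [mdeg, hempty] at h
    set i := (Finset.univ.filter fun j => α j ≠ 0).min' hsupp
    have hi : α i ≠ 0 := (Finset.mem_filter.1 (Finset.min'_mem _ hsupp)).2
    have hlt : ∀ j < i, α j = 0 := fun j hj => by
      by_contra hj'
      exact (Finset.min'_le _ j (by simpa using hj')).not_gt hj
    have hα : α - Pi.single i 1 + Pi.single i 1 = α := by
      funext j
      by_cases hj : j = i
      · subst hj; simp; omega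
      · simp [hj]
    rw [← hα]
    refine add_single _ i (fun j hj => by simp [hlt j hj]) (ih _ ?_)
    rw [← hα, mdeg_add_single] at h
    omega

end MultiIndex

section PartialDerivatives

variable {d : ℕ} {X : Type*} [NormedAddCommGroup X] [NormedSpace ℝ X]

lemma mder_zero (f : Euc d → X) : mder 0 f = f := by
  have (n : ℕ) : (List.replicate n (id : (Euc d → X) → Euc d → X)).foldr (· ∘ ·) id = id := by
    induction n <;> simp [List.replicate_succ, *]
  simp [mder, this]

lemma pder_mder {β : Fin d → ℕ} {i : Fin d} (hβ : ∀ j < i, β j = 0) (f : Euc d → X) :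
    pder i (mder β f) = mder (β + Pi.single i 1) f :=
  congrFun (comp_foldr_ofFn_iterate (fun j : Fin d => pder (X := X) j) β hβ) f

lemma pder_const_smul (i : Fin d) (c : ℝ) (f : Euc d → X) : pder i (c • f) = c • pder i f := by
  funext x
  simp [pder, fderiv_const_smul_field]

lemma pder_sum {ι : Type*} (s : Finset ι) (i : Fin d) {f : ι → Euc d → X}
    (hf : ∀ b ∈ s, Differentiable ℝ (f b)) : pder i (∑ b ∈ s, f b) = ∑ b ∈ s, pder i (f b) := by
  funext x
  simp [pder, fderiv_sum fun b hb => (hf b hb) x]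

lemma ContDiff.pder {f : Euc d → X} {m : ℕ} (hf : ContDiff ℝ (m + 1 : ℕ) f) (i : Fin d) :
    ContDiff ℝ m (pder i f) :=
  (ContinuousLinearMap.apply ℝ X (EuclideanSpace.single i 1)).contDiff.comp
    (hf.fderiv_right (by exact_mod_cast le_rfl))

lemma ContDiff.mder {f : Euc d → X} {η : ℕ} (hf : ContDiff ℝ η f) (α : Fin d → ℕ) {m : ℕ}
    (hm : mdeg α + m ≤ η) : ContDiff ℝ m (mder α f) := by
  induction α using multiIndex_induction generalizing m with
  | zero => simpa [mder_zero] using hf.of_le (by exact_mod_cast (by simpa [mdeg] using hm))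
  | add_single β i hβ ih =>
    rw [← pder_mder hβ]
    exact (ih (m := m + 1) (by rw [mdeg_add_single] at hm; omega)).pder i

end PartialDerivatives

section TaylorDerivative

variable {d : ℕ} {X : Type*} [NormedAddCommGroup X] [NormedSpace ℝ X]

def taylorDer (α : Fin d → ℕ) (f : Euc d → X) : Euc d → X := (mfact α : ℝ)⁻¹ • mder α f

lemma mder_eq_smul_taylorDer (α : Fin d → ℕ) (f : Euc d → X) :
    mder α f = (mfact α : ℝ) • taylorDer α f := by
  rw [taylorDer, smul_inv_smul₀ (Nat.cast_ne_zero.2 (mfact_ne_zero α))]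

lemma taylorDer_zero (f : Euc d → X) : taylorDer 0 f = f := by
  simp [taylorDer, mder_zero, mfact]

lemma pder_taylorDer {β : Fin d → ℕ} {i : Fin d} (hβ : ∀ j < i, β j = 0) (f : Euc d → X) :
    pder i (taylorDer β f) = ((β i : ℝ) + 1) • taylorDer (β + Pi.single i 1) f := by
  have hfact : (mfact β : ℝ) ≠ 0 := Nat.cast_ne_zero.2 (mfact_ne_zero β)
  simp only [taylorDer, pder_const_smul, pder_mder hβ, smul_smul, mfact_add_single]
  congr 1
  push_cast
  field_simp

lemma ContDiff.taylorDer {f : Euc d → X} {η : ℕ} (hf : ContDiff ℝ η f) (α : Fin d → ℕ) {m : ℕ}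
    (hm : mdeg α + m ≤ η) : ContDiff ℝ m (taylorDer α f) :=
  (hf.mder α hm).const_smul _

end TaylorDerivative

section SobolevNorm

variable {d : ℕ} {X : Type*} [NormedAddCommGroup X] [NormedSpace ℝ X]
  {η : ℕ} {p : ℝ≥0∞} {μ : Measure (Euc d)} {f : Euc d → X}

-- Unlike `sobNorm`, this takes no junk value when a derivative is not `p`-integrable.
def sobENorm (η : ℕ) (p : ℝ≥0∞) (μ : Measure (Euc d)) (f : Euc d → X) : ℝ≥0∞ :=
  ∑ α ∈ mIdx d η, eLpNorm (taylorDer α f) p μ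

lemma memW_iff_forall_memLp_taylorDer :
    MemW η p μ f ↔ ∀ α ∈ mIdx d η, MemLp (taylorDer α f) p μ :=
  ⟨fun hf α hα => (hf α hα).const_smul _,
    fun hf α hα => mder_eq_smul_taylorDer α f ▸ (hf α hα).const_smul _⟩

lemma MemW.sobENorm_lt_top (hf : MemW η p μ f) : sobENorm η p μ f < ⊤ :=
  ENNReal.sum_lt_top.2 fun α hα => (memW_iff_forall_memLp_taylorDer.1 hf α hα).eLpNorm_lt_top

lemma MemW.sobNorm_eq_toReal (hf : MemW η p μ f) :
    sobNorm η p μ f = (sobENorm η p μ f).toReal := by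
  rw [sobENorm, ENNReal.toReal_sum fun α hα =>
    (memW_iff_forall_memLp_taylorDer.1 hf α hα).eLpNorm_ne_top]
  refine Finset.sum_congr rfl fun α _ => ?_
  rw [taylorDer, eLpNorm_const_smul, ENNReal.toReal_mul, toReal_enorm, norm_inv,
    Real.norm_natCast]

lemma memW_of_sobENorm_lt_top (hf : ∀ α ∈ mIdx d η, AEStronglyMeasurable (taylorDer α f) μ)
    (hfin : sobENorm η p μ f < ⊤) : MemW η p μ f :=
  memW_iff_forall_memLp_taylorDer.2 fun α hα =>
    ⟨hf α hα, ENNReal.sum_lt_top.1 hfin α hα⟩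

end SobolevNorm

section Antidiagonal

variable {d : ℕ} {ι : Type*} [Fintype ι]

lemma mdeg_le_of_sum_eq {α : Fin d → ℕ} {B : ι → Fin d → ℕ} (h : ∑ k, B k = α) (k : ι) :
    mdeg (B k) ≤ mdeg α := by
  have hsum : mdeg α = ∑ k', mdeg (B k') := by
    simp only [mdeg, ← h, Finset.sum_apply]
    exact Finset.sum_comm
  rw [hsum]
  exact Finset.single_le_sum (fun k' _ => Nat.zero_le (mdeg (B k'))) (Finset.mem_univ k)

lemma apply_eq_zero_of_sum_eq {α : Fin d → ℕ} {B : ι → Fin d → ℕ} (h : ∑ k, B k = α) {j : Fin d}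
    (hj : α j = 0) (k : ι) : B k j = 0 := by
  rw [← h, Finset.sum_apply] at hj
  exact Finset.sum_eq_zero_iff.1 hj k (Finset.mem_univ k)

variable [DecidableEq ι]

variable (ι) in
def mAntidiag (α : Fin d → ℕ) : Finset (ι → Fin d → ℕ) :=
  (Fintype.piFinset fun _ => mIic α).filter fun B => ∑ k, B k = α

lemma mem_mAntidiag {α : Fin d → ℕ} {B : ι → Fin d → ℕ} :
    B ∈ mAntidiag ι α ↔ ∑ k, B k = α := by
  refine ⟨fun h => (Finset.mem_filter.1 h).2, fun h => Finset.mem_filter.2 ⟨?_, h⟩⟩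
  refine Fintype.mem_piFinset.2 fun k => Fintype.mem_piFinset.2 fun j => ?_
  rw [Finset.mem_range_succ_iff, ← h, Finset.sum_apply]
  exact Finset.single_le_sum (fun k' _ => Nat.zero_le (B k' j)) (Finset.mem_univ k)

lemma mAntidiag_zero : mAntidiag ι (0 : Fin d → ℕ) = {0} := by
  ext B
  rw [mem_mAntidiag, Finset.mem_singleton]
  refine ⟨fun h => funext fun k => funext fun j => apply_eq_zero_of_sum_eq h rfl k, ?_⟩
  rintro rfl
  simp

-- Raising the `i`-th entry of the `k`-th part maps the decompositions of `β` bijectively onto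
-- the decompositions of `β + eᵢ` whose `k`-th part has a nonzero `i`-th entry.
lemma sum_mAntidiag_add_single {G : Type*} [AddCommMonoid G] (β : Fin d → ℕ) (k : ι)
    (i : Fin d) {φ : (ι → Fin d → ℕ) → G} (hφ : ∀ B, B k i = 0 → φ B = 0) :
    ∑ B ∈ mAntidiag ι β, φ (B + Pi.single k (Pi.single i 1))
      = ∑ B ∈ mAntidiag ι (β + Pi.single i 1), φ B := by
  set e : ι → Fin d → ℕ := Pi.single k (Pi.single i 1)
  have hsum_e (B : ι → Fin d → ℕ) : ∑ k', (B + e) k' = ∑ k', B k' + Pi.single i 1 := by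
    simp [e, Finset.sum_add_distrib]
  refine Finset.sum_bij_ne_zero (fun B _ _ => B + e) (fun B hB _ => ?_)
    (fun _ _ _ _ _ _ h => add_right_cancel h) (fun B hB hφB => ?_) (fun _ _ _ => rfl)
  · rw [mem_mAntidiag, hsum_e, mem_mAntidiag.1 hB]
  · have hBki : B k i ≠ 0 := fun h => hφB (hφ B h)
    have hB_sub : B - e + e = B := by
      funext k' j
      by_cases hk : k' = k
      · subst hk
        by_cases hj : j = i
        · subst hj; simp [e]; omega
        · simp [e, hj]
      · simp [e, hk]
    refine ⟨B - e, mem_mAntidiag.2 ?_, by rwa [hB_sub], hB_sub⟩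
    have h := mem_mAntidiag.1 hB
    rw [← hB_sub, hsum_e] at h
    exact add_right_cancel h

lemma mdeg_le_of_mem_mAntidiag {η : ℕ} {α : Fin d → ℕ} (hα : α ∈ mIdx d η)
    {B : ι → Fin d → ℕ} (hB : B ∈ mAntidiag ι α) (k : ι) : mdeg (B k) ≤ η :=
  (mdeg_le_of_sum_eq (mem_mAntidiag.1 hB) k).trans (mem_mIdx_iff.1 hα)

lemma sum_mIdx_sum_mAntidiag_prod_le (η : ℕ) (a : ι → (Fin d → ℕ) → ℝ≥0∞) :
    ∑ α ∈ mIdx d η, ∑ B ∈ mAntidiag ι α, ∏ k, a k (B k) ≤ ∏ k, ∑ γ ∈ mIdx d η, a k γ := by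
  rw [Finset.prod_univ_sum, ← Finset.sum_biUnion]
  · refine Finset.sum_le_sum_of_subset fun B hB => ?_
    obtain ⟨α, hα, hBα⟩ := Finset.mem_biUnion.1 hB
    exact Fintype.mem_piFinset.2 fun k => mem_mIdx_iff.2 (mdeg_le_of_mem_mAntidiag hα hBα k)
  · intro α _ α' _ hne
    refine Finset.disjoint_left.2 fun B hB hB' => hne ?_
    rw [← mem_mAntidiag.1 hB, mem_mAntidiag.1 hB']

end Antidiagonal

section Holder

variable {Ω : Type*} [MeasurableSpace Ω] {μ : Measure Ω}

lemma eLpNorm_prod_le {ι : Type*} (s : Finset ι) {f : ι → Ω → ℝ} (p : ι → ℝ≥0∞)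
    (hf : ∀ i ∈ s, AEStronglyMeasurable (f i) μ) :
    eLpNorm (fun x => ∏ i ∈ s, f i x) (∑ i ∈ s, (p i)⁻¹)⁻¹ μ ≤ ∏ i ∈ s, eLpNorm (f i) (p i) μ := by
  classical
  induction s using Finset.cons_induction with
  | empty =>
    simp only [Finset.prod_empty, Finset.sum_empty, ENNReal.inv_zero, eLpNorm_exponent_top]
    exact (eLpNormEssSup_le_of_ae_bound (C := 1) (by simp)).trans (by simp)
  | cons a s ha ih =>
    simp only [Finset.prod_cons, Finset.sum_cons]
    calc eLpNorm (f a • fun x => ∏ i ∈ s, f i x) ((p a)⁻¹ + ∑ i ∈ s, (p i)⁻¹)⁻¹ μ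
        ≤ eLpNorm (f a) (p a) μ * eLpNorm (fun x => ∏ i ∈ s, f i x) (∑ i ∈ s, (p i)⁻¹)⁻¹ μ :=
          eLpNorm_smul_le_mul_eLpNorm (Finset.aestronglyMeasurable_fun_prod s
            fun i hi => hf i (Finset.mem_cons_of_mem hi)) (hf a (Finset.mem_cons_self a s))
            (hpqr := ⟨by simp⟩)
      _ ≤ eLpNorm (f a) (p a) μ * ∏ i ∈ s, eLpNorm (f i) (p i) μ := by
          gcongr
          exact ih fun i hi => hf i (Finset.mem_cons_of_mem hi)

lemma eLpNorm_multilinear_apply_le {𝕜 : Type*} [NontriviallyNormedField 𝕜] {ι : Type*}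
    [Fintype ι] {X : ι → Type*} [∀ j, NormedAddCommGroup (X j)] [∀ j, NormedSpace 𝕜 (X j)]
    {Y : Type*} [NormedAddCommGroup Y] [NormedSpace 𝕜 Y]
    {A : Ω → ContinuousMultilinearMap 𝕜 X Y} {u : ∀ j, Ω → X j} (hA : AEStronglyMeasurable A μ)
    (hu : ∀ j, AEStronglyMeasurable (u j) μ) (p : ℝ≥0∞) (ps : ι → ℝ≥0∞) :
    eLpNorm (fun x => A x fun j => u j x) (p⁻¹ + ∑ j, (ps j)⁻¹)⁻¹ μ
      ≤ eLpNorm A p μ * ∏ j, eLpNorm (u j) (ps j) μ :=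
  calc eLpNorm (fun x => A x fun j => u j x) (p⁻¹ + ∑ j, (ps j)⁻¹)⁻¹ μ
      ≤ eLpNorm ((fun x => ‖A x‖) • fun x => ∏ j, ‖u j x‖) (p⁻¹ + ∑ j, (ps j)⁻¹)⁻¹ μ :=
        eLpNorm_mono_real fun x => (A x).le_opNorm _
    _ ≤ eLpNorm (fun x => ‖A x‖) p μ * eLpNorm (fun x => ∏ j, ‖u j x‖) (∑ j, (ps j)⁻¹)⁻¹ μ :=
        eLpNorm_smul_le_mul_eLpNorm
          (Finset.aestronglyMeasurable_fun_prod _ fun j _ => (hu j).norm) hA.norm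
          (hpqr := ⟨by simp⟩)
    _ ≤ eLpNorm A p μ * ∏ j, eLpNorm (u j) (ps j) μ := by
        rw [eLpNorm_norm]
        gcongr
        simpa only [eLpNorm_norm] using
          eLpNorm_prod_le Finset.univ (f := fun j x => ‖u j x‖) ps fun j _ => (hu j).norm

end Holder

section Leibniz

variable {d r : ℕ} {X : Fin r → Type*} [∀ j, NormedAddCommGroup (X j)]
  [∀ j, NormedSpace ℝ (X j)] {Y : Type*} [NormedAddCommGroup Y] [NormedSpace ℝ Y]

lemma hasFDerivAt_multilinear_apply {E : Type*} [NormedAddCommGroup E] [NormedSpace ℝ E]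
    {A : E → ContinuousMultilinearMap ℝ X Y} {u : ∀ j, E → X j} (hA : Differentiable ℝ A)
    (hu : ∀ j, Differentiable ℝ (u j)) (x : E) :
    HasFDerivAt (fun x => A x fun j => u j x)
      (ContinuousMultilinearMap.apply ℝ X Y (u · x) ∘L fderiv ℝ A x +
        ∑ k, (A x).toContinuousLinearMap (u · x) k ∘L fderiv ℝ (u k) x) x :=
  (hA x).hasFDerivAt.continuousMultilinearMap_apply fun j => (hu j x).hasFDerivAt

lemma pder_multilinear_apply {A : Euc d → ContinuousMultilinearMap ℝ X Y}
    {u : ∀ j, Euc d → X j} (hA : Differentiable ℝ A) (hu : ∀ j, Differentiable ℝ (u j))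
    (i : Fin d) :
    pder i (fun x => A x fun j => u j x) = fun x =>
      pder i A x (fun j => u j x) + ∑ k, A x (Function.update (u · x) k (pder i (u k) x)) := by
  funext x
  rw [pder, (hasFDerivAt_multilinear_apply hA hu x).fderiv]
  simp [pder]

variable {M : Euc d → ContinuousMultilinearMap ℝ X Y} {v : ∀ j, Euc d → X j}

variable (M v) in
def leibnizTerm (B : Fin (r + 1) → Fin d → ℕ) : Euc d → Y :=
  fun x => taylorDer (B 0) M x fun j => taylorDer (B j.succ) (v j) x

lemma leibnizTerm_zero : leibnizTerm M v 0 = fun x => M x fun j => v j x := by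
  funext x
  unfold leibnizTerm
  simp only [Pi.zero_apply, taylorDer_zero]

variable {η : ℕ}

lemma continuous_leibnizTerm (hM : ContDiff ℝ η M) (hv : ∀ j, ContDiff ℝ η (v j))
    {B : Fin (r + 1) → Fin d → ℕ} (hB : ∀ k, mdeg (B k) ≤ η) :
    Continuous (leibnizTerm M v B) :=
  continuous_eval.comp (((hM.taylorDer (B 0) (m := 0) (by simpa using hB 0)).continuous).prodMk
    (continuous_pi fun j => (hv j |>.taylorDer (B j.succ) (m := 0)
      (by simpa using hB j.succ)).continuous))

lemma differentiable_leibnizTerm (hM : ContDiff ℝ η M) (hv : ∀ j, ContDiff ℝ η (v j))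
    {B : Fin (r + 1) → Fin d → ℕ} (hB : ∀ k, mdeg (B k) + 1 ≤ η) :
    Differentiable ℝ (leibnizTerm M v B) := fun x =>
  (hasFDerivAt_multilinear_apply ((hM.taylorDer (B 0) (hB 0)).differentiable one_ne_zero)
    (fun j => ((hv j).taylorDer (B j.succ) (hB j.succ)).differentiable one_ne_zero)
    x).differentiableAt

lemma pder_leibnizTerm (hM : ContDiff ℝ η M) (hv : ∀ j, ContDiff ℝ η (v j))
    {B : Fin (r + 1) → Fin d → ℕ} (hB : ∀ k, mdeg (B k) + 1 ≤ η) {i : Fin d}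
    (h0 : ∀ k, ∀ j < i, B k j = 0) :
    pder i (leibnizTerm M v B)
      = ∑ k, ((B k i : ℝ) + 1) • leibnizTerm M v (B + Pi.single k (Pi.single i 1)) := by
  unfold leibnizTerm
  rw [pder_multilinear_apply
    ((hM.taylorDer (B 0) (hB 0)).differentiable one_ne_zero)
    (fun j => ((hv j).taylorDer (B j.succ) (hB j.succ)).differentiable one_ne_zero)]
  funext x
  rw [Finset.sum_apply, Fin.sum_univ_succ]
  congr 1
  · rw [pder_taylorDer (h0 0)]
    simp [Fin.succ_ne_zero]
  · refine Finset.sum_congr rfl fun k _ => ?_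
    rw [pder_taylorDer (h0 k.succ), Pi.smul_apply, ContinuousMultilinearMap.map_update_smul]
    congr
    funext j
    by_cases hj : j = k
    · subst hj; simp
    · simp [hj]

theorem taylorDer_multilinear_apply (hM : ContDiff ℝ η M) (hv : ∀ j, ContDiff ℝ η (v j))
    {α : Fin d → ℕ} (hα : mdeg α ≤ η) :
    taylorDer α (fun x => M x fun j => v j x)
      = ∑ B ∈ mAntidiag (Fin (r + 1)) α, leibnizTerm M v B := by
  induction α using multiIndex_induction with
  | zero => simp [taylorDer_zero, mAntidiag_zero, leibnizTerm_zero]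
  | add_single β i hβ ih =>
    rw [mdeg_add_single] at hα
    have hdeg : ∀ B ∈ mAntidiag (Fin (r + 1)) β, ∀ k, mdeg (B k) + 1 ≤ η := fun B hB k => by
      have := mdeg_le_of_sum_eq (mem_mAntidiag.1 hB) k
      omega
    have h0 : ∀ B ∈ mAntidiag (Fin (r + 1)) β, ∀ k, ∀ j < i, B k j = 0 :=
      fun B hB k j hj => apply_eq_zero_of_sum_eq (mem_mAntidiag.1 hB) (hβ j hj) k
    have hcol : ∀ B ∈ mAntidiag (Fin (r + 1)) (β + Pi.single i 1),
        ∑ k, (B k i : ℝ) = β i + 1 := fun B hB => by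
      rw [← Nat.cast_sum, ← Finset.sum_apply, mem_mAntidiag.1 hB]
      simp
    have hβi : (β i : ℝ) + 1 ≠ 0 := by positivity
    calc taylorDer (β + Pi.single i 1) (fun x => M x fun j => v j x)
        = ((β i : ℝ) + 1)⁻¹ • pder i (taylorDer β fun x => M x fun j => v j x) := by
          rw [pder_taylorDer hβ, inv_smul_smul₀ hβi]
      _ = ((β i : ℝ) + 1)⁻¹ • ∑ B ∈ mAntidiag (Fin (r + 1)) β, ∑ k,
            ((B k i : ℝ) + 1) • leibnizTerm M v (B + Pi.single k (Pi.single i 1)) := by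
          rw [ih (by omega), pder_sum _ _ fun B hB =>
            differentiable_leibnizTerm hM hv (hdeg B hB)]
          congr 1
          exact Finset.sum_congr rfl fun B hB => pder_leibnizTerm hM hv (hdeg B hB) (h0 B hB)
      _ = ((β i : ℝ) + 1)⁻¹ • ∑ k, ∑ B ∈ mAntidiag (Fin (r + 1)) (β + Pi.single i 1),
            (B k i : ℝ) • leibnizTerm M v B := by
          rw [Finset.sum_comm]
          congr 1
          refine Finset.sum_congr rfl fun k _ => ?_
          rw [← sum_mAntidiag_add_single β k i (φ := fun B => (B k i : ℝ) • leibnizTerm M v B)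
            fun B hB => by simp [hB]]
          simp
      _ = ∑ B ∈ mAntidiag (Fin (r + 1)) (β + Pi.single i 1), leibnizTerm M v B := by
          rw [Finset.sum_comm, Finset.smul_sum]
          refine Finset.sum_congr rfl fun B hB => ?_
          rw [← Finset.sum_smul, hcol B hB, inv_smul_smul₀ hβi]

end Leibniz

section ProductRule

variable {d r : ℕ} {X : Fin r → Type*} [∀ j, NormedAddCommGroup (X j)]
  [∀ j, NormedSpace ℝ (X j)] {Y : Type*} [NormedAddCommGroup Y] [NormedSpace ℝ Y]
  {M : Euc d → ContinuousMultilinearMap ℝ X Y} {v : ∀ j, Euc d → X j} {η : ℕ}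

lemma continuous_taylorDer_multilinear_apply (hM : ContDiff ℝ η M)
    (hv : ∀ j, ContDiff ℝ η (v j)) {α : Fin d → ℕ} (hα : α ∈ mIdx d η) :
    Continuous (taylorDer α fun x => M x fun j => v j x) := by
  rw [taylorDer_multilinear_apply hM hv (mem_mIdx_iff.1 hα), Finset.sum_fn]
  exact continuous_finsetSum _ fun B hB =>
    continuous_leibnizTerm hM hv (mdeg_le_of_mem_mAntidiag hα hB)

lemma sobENorm_multilinear_apply_le {μ : Measure (Euc d)} (hM : ContDiff ℝ η M)
    (hv : ∀ j, ContDiff ℝ η (v j)) (p : ℝ≥0∞) (ps : Fin r → ℝ≥0∞)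
    (hq : 1 ≤ (p⁻¹ + ∑ j, (ps j)⁻¹)⁻¹) :
    sobENorm η (p⁻¹ + ∑ j, (ps j)⁻¹)⁻¹ μ (fun x => M x fun j => v j x)
      ≤ sobENorm η p μ M * ∏ j, sobENorm η (ps j) μ (v j) := by
  set N : Fin (r + 1) → (Fin d → ℕ) → ℝ≥0∞ :=
    Fin.cons (fun γ => eLpNorm (taylorDer γ M) p μ) fun j γ => eLpNorm (taylorDer γ (v j)) (ps j) μ
  have hcont {α} (hα : α ∈ mIdx d η) {B} (hB : B ∈ mAntidiag (Fin (r + 1)) α) :=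
    continuous_leibnizTerm hM hv (mdeg_le_of_mem_mAntidiag hα hB)
  have hterm {α} (hα : α ∈ mIdx d η) {B} (hB : B ∈ mAntidiag (Fin (r + 1)) α) :
      eLpNorm (leibnizTerm M v B) (p⁻¹ + ∑ j, (ps j)⁻¹)⁻¹ μ ≤ ∏ k, N k (B k) := by
    have hdeg := mdeg_le_of_mem_mAntidiag hα hB
    rw [Fin.prod_univ_succ]
    exact eLpNorm_multilinear_apply_le
      (hM.taylorDer (B 0) (m := 0) (by simpa using hdeg 0)).continuous.aestronglyMeasurable
      (fun j => ((hv j).taylorDer (B j.succ) (m := 0)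
        (by simpa using hdeg j.succ)).continuous.aestronglyMeasurable) p ps
  calc sobENorm η (p⁻¹ + ∑ j, (ps j)⁻¹)⁻¹ μ (fun x => M x fun j => v j x)
      = ∑ α ∈ mIdx d η, eLpNorm (∑ B ∈ mAntidiag (Fin (r + 1)) α, leibnizTerm M v B)
          (p⁻¹ + ∑ j, (ps j)⁻¹)⁻¹ μ :=
        Finset.sum_congr rfl fun α hα => by
          rw [taylorDer_multilinear_apply hM hv (mem_mIdx_iff.1 hα)]
    _ ≤ ∑ α ∈ mIdx d η, ∑ B ∈ mAntidiag (Fin (r + 1)) α,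
          eLpNorm (leibnizTerm M v B) (p⁻¹ + ∑ j, (ps j)⁻¹)⁻¹ μ :=
        Finset.sum_le_sum fun α hα => eLpNorm_sum_le
          (fun B hB => (hcont hα hB).aestronglyMeasurable) hq
    _ ≤ ∑ α ∈ mIdx d η, ∑ B ∈ mAntidiag (Fin (r + 1)) α, ∏ k, N k (B k) :=
        Finset.sum_le_sum fun α hα => Finset.sum_le_sum fun B hB => hterm hα hB
    _ ≤ ∏ k, ∑ γ ∈ mIdx d η, N k γ := sum_mIdx_sum_mAntidiag_prod_le η N
    _ = sobENorm η p μ M * ∏ j, sobENorm η (ps j) μ (v j) := Fin.prod_univ_succ _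

end ProductRule

theorem product_rule_sobolev_multilinear_general
    (d : ℕ) (η r : ℕ) (p : ℝ≥0∞) (ps : Fin r → ℝ≥0∞)
    (hq : 1 ≤ (p⁻¹ + ∑ j, (ps j)⁻¹)⁻¹)
    (D : Set (Euc d))
    {X : Fin r → Type*} [∀ j, NormedAddCommGroup (X j)] [∀ j, NormedSpace ℝ (X j)]
    {Y : Type*} [NormedAddCommGroup Y] [NormedSpace ℝ Y]
    (M : Euc d → ContinuousMultilinearMap ℝ X Y) (v : ∀ j, Euc d → X j)
    (hM : ContDiff ℝ (η : ℕ∞) M) (hv : ∀ j, ContDiff ℝ (η : ℕ∞) (v j))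
    (hMW : MemW η p (volume.restrict D) M)
    (hvW : ∀ j, MemW η (ps j) (volume.restrict D) (v j)) :
    MemW η ((p⁻¹ + ∑ j, (ps j)⁻¹)⁻¹) (volume.restrict D) (fun x => M x (fun j => v j x)) ∧
      sobNorm η ((p⁻¹ + ∑ j, (ps j)⁻¹)⁻¹) (volume.restrict D) (fun x => M x (fun j => v j x)) ≤
        sobNorm η p (volume.restrict D) M * ∏ j, sobNorm η (ps j) (volume.restrict D) (v j) := by
  have hbound := sobENorm_multilinear_apply_le (μ := volume.restrict D) hM hv p ps hq
  have hfin : sobENorm η p (volume.restrict D) M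
      * ∏ j, sobENorm η (ps j) (volume.restrict D) (v j) < ⊤ :=
    ENNReal.mul_lt_top hMW.sobENorm_lt_top
      (ENNReal.prod_lt_top fun j _ => (hvW j).sobENorm_lt_top)
  have hFW : MemW η ((p⁻¹ + ∑ j, (ps j)⁻¹)⁻¹) (volume.restrict D) fun x => M x fun j => v j x :=
    memW_of_sobENorm_lt_top
      (fun α hα => (continuous_taylorDer_multilinear_apply hM hv hα).aestronglyMeasurable)
      (hbound.trans_lt hfin)
  refine ⟨hFW, ?_⟩
  rw [hFW.sobNorm_eq_toReal, hMW.sobNorm_eq_toReal,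
    Finset.prod_congr rfl fun j _ => (hvW j).sobNorm_eq_toReal, ← ENNReal.toReal_prod,
    ← ENNReal.toReal_mul]
  exact ENNReal.toReal_mono hfin.ne hbound

/-- Multilinear submultiplicativity of the Sobolev–Bochner norms:
for `M ∈ W^{η,p}(D;B(X_1,…,X_r;Y))` (bounded `r`-linear maps, modelled as continuous
multilinear maps with the operator norm) and `v_j ∈ W^{η,p_j}(D;X_j)` with
`q = (p⁻¹ + ∑_j p_j⁻¹)⁻¹ ≥ 1`, the pointwise application `M v_1 ⋯ v_r` lies in
`W^{η,q}(D;Y)` and its norm is bounded by the product of the norms. -/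
theorem product_rule_sobolev_multilinear
    (d : ℕ) (hd : 1 ≤ d) (η r : ℕ) (p : ℝ≥0∞) (ps : Fin r → ℝ≥0∞)
    (hp : 1 ≤ p) (hps : ∀ j, 1 ≤ ps j)
    (hq : 1 ≤ (p⁻¹ + ∑ j, (ps j)⁻¹)⁻¹)
    (D : Set (Euc d)) (hDopen : IsOpen D) (hDbdd : Bornology.IsBounded D)
    {X : Fin r → Type*} [∀ j, NormedAddCommGroup (X j)] [∀ j, NormedSpace ℝ (X j)]
    [∀ j, CompleteSpace (X j)]
    {Y : Type*} [NormedAddCommGroup Y] [NormedSpace ℝ Y] [CompleteSpace Y]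
    (M : Euc d → ContinuousMultilinearMap ℝ X Y) (v : ∀ j, Euc d → X j)
    (hM : ContDiff ℝ (η : ℕ∞) M) (hv : ∀ j, ContDiff ℝ (η : ℕ∞) (v j))
    (hMW : MemW η p (volume.restrict D) M)
    (hvW : ∀ j, MemW η (ps j) (volume.restrict D) (v j)) :
    MemW η ((p⁻¹ + ∑ j, (ps j)⁻¹)⁻¹) (volume.restrict D) (fun x => M x (fun j => v j x)) ∧
      sobNorm η ((p⁻¹ + ∑ j, (ps j)⁻¹)⁻¹) (volume.restrict D) (fun x => M x (fun j => v j x)) ≤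
        sobNorm η p (volume.restrict D) M * ∏ j, sobNorm η (ps j) (volume.restrict D) (v j) :=
  product_rule_sobolev_multilinear_general d η r p ps hq D M v hM hv hMW hvW

end
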